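/- Let 2/3 ≤ α ≤ 1 and consider an instance of the FSSP with two agents and separate item sets in which every item weight is at most α. Then every maximin fair solution x_MM satisfies z* − z(x_MM) ≤ (2 − 1/α) · z*. -/
import Mathlib


/-! Definitions for the Fair Subset Sum Problem (FSSP) with two agents `A` and `B`
owning separate item sets with weights `a : Fin n → ℝ` and `b : Fin m → ℝ`.
A solution is a pair of index subsets; feasibility means the total selected
weight does not exceed the capacity `1`. -/

/-- Total weight of the items of `S`. -/
noncomputable def sumw {n : ℕ} (a : Fin n → ℝ) (S : Finset (Fin n)) : ℝ := ∑ i ∈ S, a i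

/-- A feasible solution of FSSP with separate item sets. -/
def Feas {n m : ℕ} (a : Fin n → ℝ) (b : Fin m → ℝ)
    (x : Finset (Fin n) × Finset (Fin m)) : Prop :=
  sumw a x.1 + sumw b x.2 ≤ 1

/-- Social utility `z(x) = a(x) + b(x)`. -/
noncomputable def zv {n m : ℕ} (a : Fin n → ℝ) (b : Fin m → ℝ)
    (x : Finset (Fin n) × Finset (Fin m)) : ℝ :=
  sumw a x.1 + sumw b x.2

/-- Pareto efficient feasible solution. -/
def Pareto {n m : ℕ} (a : Fin n → ℝ) (b : Fin m → ℝ)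
    (x : Finset (Fin n) × Finset (Fin m)) : Prop :=
  Feas a b x ∧ ¬ ∃ y, Feas a b y ∧ sumw a x.1 ≤ sumw a y.1 ∧ sumw b x.2 ≤ sumw b y.2 ∧
    (sumw a x.1 < sumw a y.1 ∨ sumw b x.2 < sumw b y.2)

/-- System optimum: a feasible solution maximizing the social utility. -/
def SysOpt {n m : ℕ} (a : Fin n → ℝ) (b : Fin m → ℝ)
    (x : Finset (Fin n) × Finset (Fin m)) : Prop :=
  Feas a b x ∧ ∀ y, Feas a b y → zv a b y ≤ zv a b x

/-- Maximin fair solution: Pareto efficient and maximizing `min{a(x), b(x)}`. -/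
def Maximin {n m : ℕ} (a : Fin n → ℝ) (b : Fin m → ℝ)
    (x : Finset (Fin n) × Finset (Fin m)) : Prop :=
  Pareto a b x ∧ ∀ y, Feas a b y →
    min (sumw a y.1) (sumw b y.2) ≤ min (sumw a x.1) (sumw b x.2)

/-- Proportional fair solution. -/
def PropFair {n m : ℕ} (a : Fin n → ℝ) (b : Fin m → ℝ)
    (x : Finset (Fin n) × Finset (Fin m)) : Prop :=
  Feas a b x ∧ 0 < sumw a x.1 ∧ 0 < sumw b x.2 ∧
    ∀ y, Feas a b y → sumw a y.1 / sumw a x.1 + sumw b y.2 / sumw b x.2 ≤ 2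

/-- Kalai–Smorodinski fair solution: Pareto efficient and maximizing
`min{a(x)/â, b(x)/b̂}`, where `â` and `b̂` are the (positive) maximal utilities
each agent can obtain over all feasible solutions. -/
def KSFair {n m : ℕ} (a : Fin n → ℝ) (b : Fin m → ℝ)
    (x : Finset (Fin n) × Finset (Fin m)) : Prop :=
  Pareto a b x ∧ ∃ ahat bhat : ℝ, 0 < ahat ∧ 0 < bhat ∧
    IsGreatest {v | ∃ y, Feas a b y ∧ sumw a y.1 = v} ahat ∧
    IsGreatest {v | ∃ y, Feas a b y ∧ sumw b y.2 = v} bhat ∧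
    ∀ y, Feas a b y →
      min (sumw a y.1 / ahat) (sumw b y.2 / bhat) ≤
        min (sumw a x.1 / ahat) (sumw b x.2 / bhat)

/-- A valid FSSP instance with separate item sets in which every item weight is
nonnegative and at most `α`, and the total weight exceeds the capacity `1`. -/
def ValidInst {n m : ℕ} (a : Fin n → ℝ) (b : Fin m → ℝ) (α : ℝ) : Prop :=
  (∀ i, 0 ≤ a i) ∧ (∀ i, 0 ≤ b i) ∧ (∀ i, a i ≤ α) ∧ (∀ i, b i ≤ α) ∧
    1 < (∑ i, a i) + (∑ i, b i)


lemma key_arith (α A B as bs w : ℝ) (hα0 : 2/3 ≤ α) (hα1 : α ≤ 1)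
    (hA : 0 ≤ A) (hB : 0 ≤ B) (hbs : 0 ≤ bs) (hzs : as + bs ≤ 1)
    (hw1 : 1 - (A + B) < w) (hwα : w ≤ α)
    (hmin : bs ≤ A)
    (h1 : w ≤ A ∨ 1 < w + B)
    (h2 : as - w ≤ A ∨ 1 < (as - w) + B) :
    (as + bs) - (A + B) ≤ (2 - 1/α) * (as + bs) := by
  have hαpos : (0:ℝ) < α := by linarith
  have key' : (1 - α) * (as + bs) ≤ α * (A + B) := by
    have h12 : 1/2 < A + B → (1 - α) * (as + bs) ≤ α * (A + B) := by
      intro hz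
      nlinarith [mul_le_mul_of_nonneg_left hzs (by linarith : (0:ℝ) ≤ 1 - α)]
    rcases h1 with h1 | h1
    · exact h12 (by linarith)
    · have hBα : 1 - α < B := by linarith
      rcases h2 with h2 | h2
      · nlinarith [mul_nonneg (by linarith : (0:ℝ) ≤ 1 - α) hA]
      · exact h12 (by nlinarith)
  rw [show (2 - 1/α) * (as + bs) = 2*(as + bs) - (1/α) * (as + bs) by ring]
  have h3 : (1/α) * (as + bs) ≤ (as + bs) + (A + B) := by
    rw [div_mul_eq_mul_div, div_le_iff₀ hαpos]
    nlinarith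
  linarith

lemma main_case {n m : ℕ} (α : ℝ) (hα0 : 2/3 ≤ α) (hα1 : α ≤ 1)
    (a : Fin n → ℝ) (b : Fin m → ℝ)
    (ha0 : ∀ i, 0 ≤ a i) (hb0 : ∀ i, 0 ≤ b i) (haα : ∀ i, a i ≤ α)
    (xopt xMM : Finset (Fin n) × Finset (Fin m))
    (hFo : Feas a b xopt) (hMM : Maximin a b xMM)
    (hlt : sumw a xMM.1 < sumw a xopt.1) :
    zv a b xopt - zv a b xMM ≤ (2 - 1/α) * zv a b xopt := by
  obtain ⟨⟨hFx, hPar⟩, hmm⟩ := hMM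
  set A := sumw a xMM.1 with hAdef
  set B := sumw b xMM.2 with hBdef
  set as := sumw a xopt.1 with hasdef
  set bs := sumw b xopt.2 with hbsdef
  have hA : 0 ≤ A := Finset.sum_nonneg fun i _ => ha0 i
  have hB : 0 ≤ B := Finset.sum_nonneg fun i _ => hb0 i
  have hbs : 0 ≤ bs := Finset.sum_nonneg fun i _ => hb0 i
  -- domination helper: replacing agent A's set by a strictly better feasible one
  -- contradicts Pareto efficiency
  have hdom : ∀ S : Finset (Fin n), A < sumw a S → sumw a S + B ≤ 1 → False := by
    intro S hS hfeas
    exact hPar ⟨(S, xMM.2), hfeas, le_of_lt hS, le_refl B, Or.inl hS⟩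
  -- find a heavy item i ∈ xopt.1 \ xMM.1 with a i > 0
  have hsplit : sumw a (xopt.1 ∩ xMM.1) + sumw a (xopt.1 \ xMM.1) = as :=
    Finset.sum_inter_add_sum_sdiff xopt.1 xMM.1 a
  have hinter : sumw a (xopt.1 ∩ xMM.1) ≤ A :=
    Finset.sum_le_sum_of_subset_of_nonneg Finset.inter_subset_right
      (fun i _ _ => ha0 i)
  have hdiffpos : 0 < sumw a (xopt.1 \ xMM.1) := by linarith
  obtain ⟨i, hidiff, hipos⟩ : ∃ i ∈ xopt.1 \ xMM.1, 0 < a i := by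
    by_contra h
    push_neg at h
    have : sumw a (xopt.1 \ xMM.1) ≤ 0 := Finset.sum_nonpos h
    linarith
  obtain ⟨hiopt, hinx⟩ := Finset.mem_sdiff.mp hidiff
  have hwα : a i ≤ α := haα i
  have hins : sumw a (insert i xMM.1) = a i + A := Finset.sum_insert hinx
  have herase : sumw a (xopt.1.erase i) = as - a i := by
    have := Finset.sum_erase_add xopt.1 a hiopt
    simp only [sumw] at *
    linarith
  have hw1 : 1 - (A + B) < a i := by
    by_contra h
    push_neg at h
    exact hdom (insert i xMM.1) (by rw [hins]; linarith) (by rw [hins]; linarith)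
  have h1 : a i ≤ A ∨ 1 < a i + B := by
    by_contra h
    push_neg at h
    exact hdom {i} (by simpa [sumw] using h.1) (by simpa [sumw] using h.2)
  have h2 : as - a i ≤ A ∨ 1 < (as - a i) + B := by
    by_contra h
    push_neg at h
    exact hdom (xopt.1.erase i) (by rw [herase]; exact h.1) (by rw [herase]; linarith [h.2])
  have hmin : bs ≤ A := by
    have := hmm xopt hFo
    rcases min_le_iff.mp (le_trans this (min_le_left A B)) with h | h
    · exact absurd h (not_le.mpr hlt)
    · exact h
  have hzs : as + bs ≤ 1 := hFo
  have := key_arith α A B as bs (a i) hα0 hα1 hA hB hbs hzs hw1 hwα hmin h1 h2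
  simpa [zv, ← hAdef, ← hBdef, ← hasdef, ← hbsdef] using this

lemma Feas_swap {n m : ℕ} {a : Fin n → ℝ} {b : Fin m → ℝ}
    {x : Finset (Fin n) × Finset (Fin m)} (h : Feas a b x) : Feas b a (x.2, x.1) := by
  simpa [Feas, add_comm] using h

lemma Maximin_swap {n m : ℕ} {a : Fin n → ℝ} {b : Fin m → ℝ}
    {x : Finset (Fin n) × Finset (Fin m)} (h : Maximin a b x) :
    Maximin b a (x.2, x.1) := by
  obtain ⟨⟨hF, hP⟩, hm⟩ := h
  refine ⟨⟨Feas_swap hF, ?_⟩, ?_⟩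
  · rintro ⟨y, hFy, h1, h2, h3⟩
    exact hP ⟨(y.2, y.1), Feas_swap hFy, h2, h1, h3.symm⟩
  · intro y hFy
    have := hm (y.2, y.1) (Feas_swap hFy)
    simpa [min_comm] using this

/-- For `2/3 ≤ α ≤ 1`, every maximin fair solution of an FSSP instance with
separate item sets and item weights at most `α` satisfies
`z* - z(x_MM) ≤ (2 - 1/α) · z*`. -/
theorem pof_maximin_large_alpha (α : ℝ) (hα0 : 2/3 ≤ α) (hα1 : α ≤ 1)
    {n m : ℕ} (a : Fin n → ℝ) (b : Fin m → ℝ) (hinst : ValidInst a b α)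
    (xopt : Finset (Fin n) × Finset (Fin m)) (hopt : SysOpt a b xopt)
    (xMM : Finset (Fin n) × Finset (Fin m)) (hMM : Maximin a b xMM) :
    zv a b xopt - zv a b xMM ≤ (2 - 1/α) * zv a b xopt := by
  obtain ⟨ha0, hb0, haα, hbα, htot⟩ := hinst
  have hαpos : (0:ℝ) < α := by linarith
  have hzs0 : 0 ≤ zv a b xopt := by
    have h1 : 0 ≤ sumw a xopt.1 := Finset.sum_nonneg fun i _ => ha0 i
    have h2 : 0 ≤ sumw b xopt.2 := Finset.sum_nonneg fun i _ => hb0 i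
    simp only [zv]; linarith
  by_cases hle : zv a b xopt ≤ zv a b xMM
  · have hc : (0:ℝ) ≤ 2 - 1/α := by
      rw [sub_nonneg, div_le_iff₀ hαpos]; linarith
    nlinarith
  · push_neg at hle
    have : sumw a xMM.1 < sumw a xopt.1 ∨ sumw b xMM.2 < sumw b xopt.2 := by
      by_contra h
      push_neg at h
      simp only [zv] at hle
      linarith [h.1, h.2]
    rcases this with h | h
    · exact main_case α hα0 hα1 a b ha0 hb0 haα xopt xMM hopt.1 hMM h
    · have := main_case α hα0 hα1 b a hb0 ha0 hbα (xopt.2, xopt.1) (xMM.2, xMM.1)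
        (Feas_swap hopt.1) (Maximin_swap hMM) h
      simpa [zv, add_comm] using this
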